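/- arXiv:2201.01111 — 2 statements merged into one kernel-verified Lean document; each statement's English description precedes it below -/
import Mathlib

section
/- Let A and B be self-adjoint n×n complex matrices with eigenvalues listed in increasing order λ₁(A) ≤ ⋯ ≤ λₙ(A) and λ₁(B) ≤ ⋯ ≤ λₙ(B). Then for every k ∈ {1,…,n}, |λ_k(A) − λ_k(B)| ≤ ‖A − B‖, where ‖·‖ is the operator norm. -/
/-!
Courant–Fischer in its simplest form. Let `U` be spanned by eigenvectors of `A` for its `k + 1`
smallest eigenvalues and `V` by eigenvectors of `B` for its `n - k` largest ones. Since
`dim U + dim V = n + 1`, they share a unit vector `v`, and then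
`λ_k(B) - λ_k(A) ≤ re ⟪v, (B - A) v⟫ ≤ ‖B - A‖`. Exchanging `A` and `B` gives the other half.
-/

/-- The `ℓ² → ℓ²` operator norm of a complex matrix. -/
noncomputable def l2OpNorm2 {n : ℕ} (M : Matrix (Fin n) (Fin n) ℂ) : ℝ :=
  ‖LinearMap.toContinuousLinearMap (Matrix.toEuclideanLin M)‖

open scoped InnerProductSpace
open Module Finset RCLike

namespace OrthonormalBasis

variable {𝕜 E ι : Type*} [RCLike 𝕜] [NormedAddCommGroup E] [InnerProductSpace 𝕜 E] [Fintype ι]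
  (b : OrthonormalBasis ι 𝕜 E) {T : E →ₗ[𝕜] E} {lam : ι → ℝ}

theorem re_inner_apply_self_eq_sum (hb : ∀ i, T (b i) = (lam i : 𝕜) • b i) (v : E) :
    re ⟪v, T v⟫_𝕜 = ∑ i, lam i * ‖b.repr v i‖ ^ 2 := by
  have hTv : T v = ∑ i, (lam i * b.repr v i) • b i := by
    conv_lhs => rw [← b.sum_repr v]
    simp only [map_sum, map_smul, hb, smul_smul, mul_comm]
  rw [hTv, inner_sum, map_sum]
  refine sum_congr rfl fun i _ => ?_
  rw [inner_smul_right, ← inner_conj_symm, ← b.repr_apply_apply, mul_assoc, RCLike.mul_conj]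
  norm_cast

theorem repr_eq_zero_of_mem_span {s : Set ι} {v : E} (hv : v ∈ Submodule.span 𝕜 (b '' s))
    {i : ι} (hi : i ∉ s) : b.repr v i = 0 := by
  rw [← b.coe_toBasis, Basis.mem_span_image] at hv
  simpa using Finsupp.notMem_support_iff.1 fun h => hi (hv h)

theorem sum_sq_norm_repr (v : E) : ∑ i, ‖b.repr v i‖ ^ 2 = ‖v‖ ^ 2 := by
  simpa only [b.repr_apply_apply] using b.sum_sq_norm_inner_right v

variable {s : Set ι} {v : E} {c : ℝ}

theorem re_inner_apply_self_le (hb : ∀ i, T (b i) = (lam i : 𝕜) • b i)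
    (hv : v ∈ Submodule.span 𝕜 (b '' s)) (hc : ∀ i ∈ s, lam i ≤ c) :
    re ⟪v, T v⟫_𝕜 ≤ c * ‖v‖ ^ 2 := by
  rw [b.re_inner_apply_self_eq_sum hb, ← b.sum_sq_norm_repr, mul_sum]
  refine sum_le_sum fun i _ => ?_
  by_cases hi : i ∈ s
  · exact mul_le_mul_of_nonneg_right (hc i hi) (by positivity)
  · simp [b.repr_eq_zero_of_mem_span hv hi]

theorem le_re_inner_apply_self (hb : ∀ i, T (b i) = (lam i : 𝕜) • b i)
    (hv : v ∈ Submodule.span 𝕜 (b '' s)) (hc : ∀ i ∈ s, c ≤ lam i) :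
    c * ‖v‖ ^ 2 ≤ re ⟪v, T v⟫_𝕜 := by
  have h := b.re_inner_apply_self_le (T := -T) (lam := -lam) (fun i => by simp [hb]) hv
    (c := -c) fun i hi => neg_le_neg (hc i hi)
  simp only [LinearMap.neg_apply, inner_neg_right, map_neg, neg_mul] at h
  linarith

theorem finrank_span_image_finset (s : Finset ι) :
    finrank 𝕜 (Submodule.span 𝕜 (b '' s)) = #s := by
  rw [Set.image_eq_range, finrank_span_eq_card]
  · simp
  · exact (b.orthonormal.comp _ Subtype.val_injective).linearIndependent

end OrthonormalBasis

theorem Submodule.exists_mem_inf_ne_zero_of_finrank_lt {K V : Type*} [DivisionRing K]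
    [AddCommGroup V] [Module K V] [FiniteDimensional K V] {U W : Submodule K V}
    (h : finrank K V < finrank K U + finrank K W) : ∃ v ∈ U ⊓ W, v ≠ 0 := by
  refine (Submodule.ne_bot_iff _).1 fun hUW => ?_
  have hdim := Submodule.finrank_sup_add_finrank_inf_eq U W
  rw [hUW, finrank_bot] at hdim
  have := (U ⊔ W).finrank_le
  omega

section Weyl

variable {𝕜 E : Type*} [RCLike 𝕜] [NormedAddCommGroup E] [InnerProductSpace 𝕜 E]
  [FiniteDimensional 𝕜 E]

theorem sub_le_norm_sub_of_orthonormalBasis_eigenvectors {ι κ : Type*} [Fintype ι] [Fintype κ]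
    (b : OrthonormalBasis ι 𝕜 E) (b' : OrthonormalBasis κ 𝕜 E) {T S : E →ₗ[𝕜] E}
    {lam : ι → ℝ} {lam' : κ → ℝ} (hb : ∀ i, T (b i) = (lam i : 𝕜) • b i)
    (hb' : ∀ j, S (b' j) = (lam' j : 𝕜) • b' j) {s : Finset ι} {t : Finset κ}
    (hst : finrank 𝕜 E < #s + #t) {c d : ℝ} (hc : ∀ i ∈ s, lam i ≤ c)
    (hd : ∀ j ∈ t, d ≤ lam' j) :
    d - c ≤ ‖LinearMap.toContinuousLinearMap (S - T)‖ := by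
  obtain ⟨v, ⟨hvs, hvt⟩, hv⟩ :=
    Submodule.exists_mem_inf_ne_zero_of_finrank_lt (U := Submodule.span 𝕜 (b '' s))
      (W := Submodule.span 𝕜 (b' '' t))
      (by rwa [b.finrank_span_image_finset, b'.finrank_span_image_finset])
  have hT := b.re_inner_apply_self_le hb hvs hc
  have hS := b'.le_re_inner_apply_self hb' hvt hd
  have hST : re ⟪v, (S - T) v⟫_𝕜 ≤ ‖LinearMap.toContinuousLinearMap (S - T)‖ * ‖v‖ ^ 2 :=
    calc re ⟪v, (S - T) v⟫_𝕜 ≤ ‖v‖ * ‖LinearMap.toContinuousLinearMap (S - T) v‖ :=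
          re_inner_le_norm _ _
      _ ≤ ‖v‖ * (‖LinearMap.toContinuousLinearMap (S - T)‖ * ‖v‖) := by
          gcongr
          exact ContinuousLinearMap.le_opNorm _ _
      _ = _ := by ring
  rw [LinearMap.sub_apply, inner_sub_right, map_sub] at hST
  refine le_of_mul_le_mul_right ?_ (by positivity : 0 < ‖v‖ ^ 2)
  linarith

end Weyl

theorem Matrix.IsHermitian.toEuclideanLin_eigenvectorBasis {𝕜 n : Type*} [RCLike 𝕜] [Fintype n]
    [DecidableEq n] {A : Matrix n n 𝕜} (hA : A.IsHermitian) (i : n) :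
    toEuclideanLin A (hA.eigenvectorBasis i) = (hA.eigenvalues i : 𝕜) • hA.eigenvectorBasis i := by
  ext j
  simp only [Matrix.toLpLin_apply, PiLp.smul_apply, ← RCLike.real_smul_eq_coe_smul]
  exact congrFun (hA.mulVec_eigenvectorBasis i) j

theorem l2OpNorm2_sub_comm {n : ℕ} (A B : Matrix (Fin n) (Fin n) ℂ) :
    l2OpNorm2 (B - A) = l2OpNorm2 (A - B) := by
  rw [← neg_sub A B, l2OpNorm2, l2OpNorm2, map_neg, map_neg, norm_neg]

theorem Matrix.IsHermitian.eigenvalues_sub_le_l2OpNorm2 {n : ℕ} {A B : Matrix (Fin n) (Fin n) ℂ}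
    (hA : A.IsHermitian) (hB : B.IsHermitian) {eA eB : Equiv.Perm (Fin n)}
    (hAmono : Monotone (hA.eigenvalues ∘ eA)) (hBmono : Monotone (hB.eigenvalues ∘ eB))
    (k : Fin n) : hB.eigenvalues (eB k) - hA.eigenvalues (eA k) ≤ l2OpNorm2 (B - A) := by
  rw [l2OpNorm2, map_sub]
  refine sub_le_norm_sub_of_orthonormalBasis_eigenvectors hA.eigenvectorBasis
    hB.eigenvectorBasis hA.toEuclideanLin_eigenvectorBasis hB.toEuclideanLin_eigenvectorBasis
    (s := (Iic k).map eA.toEmbedding) (t := (Ici k).map eB.toEmbedding) ?_ ?_ ?_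
  · simp only [finrank_euclideanSpace_fin, card_map, Fin.card_Iic, Fin.card_Ici]
    omega
  · intro i hi
    simpa using hAmono (mem_Iic.1 (mem_map_equiv.1 hi))
  · intro i hi
    simpa using hBmono (mem_Ici.1 (mem_map_equiv.1 hi))

/-- Weyl's perturbation theorem: if `A`, `B` are self-adjoint (Hermitian)
`n×n` complex matrices and `μ`, `ν` are the increasing enumerations of their eigenvalues,
then `|μ k − ν k| ≤ ‖A − B‖` for every `k`. -/
theorem stmt2 {n : ℕ} (A B : Matrix (Fin n) (Fin n) ℂ)
    (hA : A.IsHermitian) (hB : B.IsHermitian)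
    (μ ν : Fin n → ℝ) (hμmono : Monotone μ) (hνmono : Monotone ν)
    (eA eB : Equiv.Perm (Fin n))
    (hμ : μ = hA.eigenvalues ∘ eA) (hν : ν = hB.eigenvalues ∘ eB) :
    ∀ k : Fin n, |μ k - ν k| ≤ l2OpNorm2 (A - B) := by
  subst hμ hν
  intro k
  rw [abs_sub_le_iff]
  constructor
  · exact hB.eigenvalues_sub_le_l2OpNorm2 hA hνmono hμmono k
  · rw [← l2OpNorm2_sub_comm]
    exact hA.eigenvalues_sub_le_l2OpNorm2 hB hμmono hνmono k
end

section
/- Let γ ∈ (0,1), τ > 0, and for i, j ∈ ℕ and ℓ ∈ ℤ^d with |ℓ| ≤ N, suppose λ_i^∞, λ_j^∞ and λ_i^n, λ_j^n are real numbers with |λ_k^∞ − λ_k^n| ≤ 2εN_{n-1}^{-a}/⟨k⟩ for k = i, j, where 4εγ^{-1}N_{n-1}^{τ} ≤ N_{n-1}^{a}. If |ω·ℓ + λ_i^∞ − λ_j^∞| ≥ 2γ⟨i−j⟩/⟨ℓ⟩^τ, then |ω·ℓ + λ_i^n − λ_j^n| ≥ γ⟨i−j⟩/N_{n-1}^τ,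 for all (ℓ,i,j) ≠ (0,j,j). -/
/-- Sup norm of an integer vector, as a real number. -/
noncomputable def intSupNorm16 {d : ℕ} (ℓ : Fin d → ℤ) : ℝ :=
  ((Finset.univ.sup fun i => (ℓ i).natAbs : ℕ) : ℝ)

/-- stability of the small divisors: let `γ ∈ (0,1)`, `τ > 0`, `|ℓ| ≤ N`
(`N = N_{n−1}`), and suppose `|λ_k^∞ − λ_k^n| ≤ 2εN^{−a}/⟨k⟩` for `k = i, j` with
`4εγ^{−1}N^τ ≤ N^a`. If `|ω·ℓ + λ_i^∞ − λ_j^∞| ≥ 2γ⟨i−j⟩/⟨ℓ⟩^τ`, then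
`|ω·ℓ + λ_i^n − λ_j^n| ≥ γ⟨i−j⟩/N^τ`, for all `(ℓ,i,j) ≠ (0,j,j)`. -/
theorem stmt16 (d : ℕ) (γ τ : ℝ) (hγ : γ ∈ Set.Ioo (0:ℝ) 1) (hτ : 0 < τ)
    (N ε a : ℝ) (hN : 1 ≤ N) (hε : 0 ≤ ε) (ha : 0 < a)
    (ω : Fin d → ℝ) (ℓ : Fin d → ℤ) (i j : ℕ)
    (hℓ : intSupNorm16 ℓ ≤ N)
    (liInf ljInf lin ljn : ℝ)
    (hi : |liInf - lin| ≤ 2 * ε * N ^ (-a) / max 1 (i : ℝ))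
    (hj : |ljInf - ljn| ≤ 2 * ε * N ^ (-a) / max 1 (j : ℝ))
    (hsmall : 4 * ε * γ⁻¹ * N ^ τ ≤ N ^ a)
    (hne : ¬(ℓ = 0 ∧ i = j))
    (hnr : 2 * γ * max 1 |(i : ℝ) - (j : ℝ)| / (max 1 (intSupNorm16 ℓ)) ^ τ ≤
      |(∑ k, ω k * (ℓ k : ℝ)) + liInf - ljInf|) :
    γ * max 1 |(i : ℝ) - (j : ℝ)| / N ^ τ ≤
      |(∑ k, ω k * (ℓ k : ℝ)) + lin - ljn| := by
  obtain ⟨hγ0, hγ1⟩ := hγ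
  set S : ℝ := ∑ k, ω k * (ℓ k : ℝ)
  set M : ℝ := max 1 |(i : ℝ) - (j : ℝ)| with hM
  have hM1 : (1:ℝ) ≤ M := le_max_left _ _
  set L : ℝ := max 1 (intSupNorm16 ℓ) with hL
  have hL1 : (1:ℝ) ≤ L := le_max_left _ _
  have hLN : L ≤ N := max_le hN hℓ
  have hN0 : (0:ℝ) < N := lt_of_lt_of_le one_pos hN
  have hNτ : (0:ℝ) < N ^ τ := Real.rpow_pos_of_pos hN0 τ
  have hNa : (0:ℝ) < N ^ a := Real.rpow_pos_of_pos hN0 a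
  have hLτ : (0:ℝ) < L ^ τ := Real.rpow_pos_of_pos (lt_of_lt_of_le one_pos hL1) τ
  have hLτN : L ^ τ ≤ N ^ τ :=
    Real.rpow_le_rpow (le_of_lt (lt_of_lt_of_le one_pos hL1)) hLN hτ.le
  -- error bounds
  have hi' : |liInf - lin| ≤ 2 * ε * N ^ (-a) :=
    hi.trans (div_le_self (by positivity) (le_max_left _ _))
  have hj' : |ljInf - ljn| ≤ 2 * ε * N ^ (-a) :=
    hj.trans (div_le_self (by positivity) (le_max_left _ _))
  -- 4 ε N^{-a} ≤ γ / N^τ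
  have hkey0 : 4 * ε * N ^ τ ≤ γ * N ^ a := by
    have h := mul_le_mul_of_nonneg_left hsmall hγ0.le
    calc 4 * ε * N ^ τ = γ * (4 * ε * γ⁻¹ * N ^ τ) := by
          field_simp
      _ ≤ γ * N ^ a := h
  have hkey : 4 * ε * N ^ (-a) ≤ γ / N ^ τ := by
    rw [Real.rpow_neg hN0.le, show 4 * ε * (N ^ a)⁻¹ = 4 * ε / N ^ a from
      (div_eq_mul_inv _ _).symm, div_le_div_iff₀ hNa hNτ]
    linarith
  -- 2γM/L^τ ≥ 2γM/N^τ
  have hfrac : 2 * γ * M / N ^ τ ≤ 2 * γ * M / L ^ τ :=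
    div_le_div_of_nonneg_left (by positivity) hLτ hLτN
  have hstart : 2 * γ * M / N ^ τ ≤ |S + liInf - ljInf| := hfrac.trans hnr
  -- triangle
  have htri : |S + liInf - ljInf| - |liInf - lin| - |ljInf - ljn| ≤ |S + lin - ljn| := by
    have h1 : |S + liInf - ljInf| ≤ |S + lin - ljn| + |liInf - lin| + |ljInf - ljn| := by
      have heq : S + liInf - ljInf = (S + lin - ljn) + (liInf - lin) - (ljInf - ljn) := by ring
      rw [heq]
      calc |(S + lin - ljn) + (liInf - lin) - (ljInf - ljn)|
          ≤ |(S + lin - ljn) + (liInf - lin)| + |ljInf - ljn| := abs_sub _ _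
        _ ≤ |S + lin - ljn| + |liInf - lin| + |ljInf - ljn| := by
            gcongr; exact abs_add_le _ _
    linarith
  have hMdiv : γ / N ^ τ ≤ γ * M / N ^ τ := by
    gcongr
    nlinarith
  have h2 : 2 * γ * M / N ^ τ = 2 * (γ * M / N ^ τ) := by ring
  linarith
end
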